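/- arXiv:1801.02713 — 2 statements merged into one kernel-verified Lean document; each statement's English description precedes it below -/
import Mathlib

section
/- Let F be a field, let m ≥ 1 and N ≥ 0 be integers, let c : ℕ → F be a sequence of inputs, and let S : ℕ → Fin m → F be the circular shift-register state for c. Then S N j = 0 for all registers j if and only if for every residue class r modulo m, Σ_{i : 1 ≤ i ≤ N, i ≡ r (mod m)} c i = 0. -/
/-!
Unrolling the recursion, register `j` at time `k` holds the sum of the inputs `c i`,
`1 ≤ i ≤ k`, with `i ≡ k - j (mod m)`: each input enters register `0` and advances one
register per step, wrapping around modulo `m`. As `j` runs over the registers, `k - j`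
runs over all residue classes modulo `m`.
-/

open Finset

/-- The circular shift-register state for inputs `c : ℕ → F` (indices starting at 1) and
`m` registers: `S 0 j = 0`, `S k 0 = c k + S (k−1) (m−1)` for `k ≥ 1`, and
`S k j = S (k−1) (j−1)` for `k ≥ 1`, `1 ≤ j ≤ m−1`.  (In `Fin m`, `0 - 1 = m - 1`, so the
single equation below covers both cases.) -/
def shiftState {F : Type*} [Field F] (m : ℕ) [NeZero m] (c : ℕ → F) :
    ℕ → Fin m → F
  | 0, _ => 0
  | (k + 1), j =>
      if j = 0 then c (k + 1) + shiftState m c k (j - 1)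
      else shiftState m c k (j - 1)

section

variable {F : Type*} [Field F] {m : ℕ} [NeZero m] (c : ℕ → F)

theorem shiftState_succ (k : ℕ) (j : Fin m) :
    shiftState m c (k + 1) j = shiftState m c k (j - 1) + if j = 0 then c (k + 1) else 0 := by
  rw [shiftState]
  split_ifs <;> simp [add_comm]

theorem shiftState_eq_sum_filter (k : ℕ) (j : Fin m) :
    shiftState m c k j =
      ∑ i ∈ (Icc 1 k).filter (fun i : ℕ => (i : ZMod m) = k - ZMod.finEquiv m j), c i := by
  rw [sum_filter]
  induction k generalizing j with
  | zero => simp [shiftState]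
  | succ k ih =>
    have hj : (k + 1 : ZMod m) = k + 1 - ZMod.finEquiv m j ↔ j = 0 := by
      rw [eq_sub_iff_add_eq, add_eq_left, map_eq_zero_iff _ (ZMod.finEquiv m).injective]
    rw [shiftState_succ, ih, sum_Icc_succ_top (Nat.le_add_left 1 k), map_sub, map_one]
    push_cast
    simp only [sub_sub_eq_add_sub, hj]

end

/-- the tail-biting termination condition.  The shift register returns to
the all-zero state at time `N` if and only if, for every residue class `r` modulo `m`,
`Σ_{1 ≤ i ≤ N, i ≡ r (mod m)} c i = 0`. -/
theorem shiftState_eq_zero_iff_residue_sums_eq_zero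
    {F : Type*} [Field F] (m : ℕ) [NeZero m] (N : ℕ) (c : ℕ → F) :
    (∀ j : Fin m, shiftState m c N j = 0) ↔
      (∀ r : ZMod m,
        ∑ i ∈ (Finset.Icc 1 N).filter (fun i : ℕ => ((i : ZMod m)) = r), c i = 0) := by
  constructor
  · intro h r
    have hj := h ((ZMod.finEquiv m).symm (N - r))
    rwa [shiftState_eq_sum_filter, RingEquiv.apply_symm_apply, sub_sub_cancel] at hj
  · intro h j
    rw [shiftState_eq_sum_filter]
    exact h _
end

section
/- Let F be a finite field, let (Ω, P) be a probability space, let (c_i)_{i ≥ 1} be mutually independent F-valued random variables, let m ≥ 1, and let S be the circular shift-register state computed pathwise from the inputs. Let h : Fin m → F be any coefficients and define, for k ≥ 1, the output random variable b_k = c_k + Σ_{j=0}^{m−1} h j · S (k−1) j. Then for every ω ∈ F, P(b_k = ω) = Σ_{u : Fin m → F} P(c_k = ω − Σ_{j=0}^{m−1} h j · u j) · Π_{j=0}^{m−1} P(S (k−1) j = u j); that is, the probability mass function of b_k is the iterated group convolution of the probability mass function of c_k with the h_j-permuted probability mass functions of the register contents S (k−1) j. -/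
/-!
Unrolling the recursion, register `j` at time `k - 1` holds the sum of the inputs `c t` with
`t < k` and `k - 1 - t ≡ j (mod m)`. These index blocks are pairwise disjoint and miss `k`, so
`c k` and the registers are sums of the independent inputs over disjoint blocks, hence mutually
independent. Splitting the event `b_k = ω` according to the value `u` of the register vector
gives the convolution formula.
-/

open MeasureTheory ProbabilityTheory Finset

open Function

theorem Pairwise.option_elim {α ι : Type*} {r : α → α → Prop} [Std.Symm r] {a : α}
    {f : ι → α} (hf : Pairwise (r on f)) (ha : ∀ i, r a (f i)) :
    Pairwise (r on fun o : Option ι ↦ o.elim a f) := by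
  rintro (_ | i) (_ | j) hij
  exacts [absurd rfl hij, ha j, symm (ha i), hf fun h ↦ hij (congrArg some h)]

namespace ProbabilityTheory

variable {Ω ι κ : Type*} {mΩ : MeasurableSpace Ω} {μ : Measure Ω}

theorem iIndep.iIndep_biSup {m : ι → MeasurableSpace Ω} (h_le : ∀ i, m i ≤ mΩ)
    (h : iIndep m μ) {T : κ → Set ι} (hT : Pairwise (Disjoint on T)) :
    iIndep (fun k ↦ ⨆ i ∈ T k, m i) μ := by
  have := h.isProbabilityMeasure
  classical
  refine (iIndep_iff _ μ).2 fun s ↦ ?_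
  induction s using Finset.induction_on with
  | empty => simp
  | insert k s hk ih =>
    intro f hf
    have hdisj : Disjoint (T k) (⋃ l ∈ s, T l) :=
      Set.disjoint_iUnion₂_right.2 fun l hl ↦ hT (ne_of_mem_of_not_mem hl hk).symm
    have hrest : MeasurableSet[⨆ i ∈ ⋃ l ∈ s, T l, m i] (⋂ l ∈ s, f l) :=
      Finset.measurableSet_biInter s fun l hl ↦
        have hle : ⨆ i ∈ T l, m i ≤ ⨆ i ∈ ⋃ l ∈ s, T l, m i :=
          biSup_mono fun i hi ↦ Set.mem_biUnion hl hi
        hle _ (hf l (mem_insert_of_mem hl))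
    rw [set_biInter_insert, prod_insert hk,
      (Indep_iff _ _ μ).1 (indep_iSup_of_disjoint h_le h hdisj) _ _ (hf k (mem_insert_self k s))
        hrest,
      ih fun l hl ↦ hf l (mem_insert_of_mem hl)]

theorem iIndepFun.iIndepFun_of_measurable_biSup {β γ : Type*} [mβ : MeasurableSpace β]
    [MeasurableSpace γ] {X : ι → Ω → β} {Y : κ → Ω → γ} (hX : ∀ i, Measurable (X i))
    (h : iIndepFun X μ) {T : κ → Set ι} (hT : Pairwise (Disjoint on T))
    (hY : ∀ k, Measurable[⨆ i ∈ T k, mβ.comap (X i)] (Y k)) : iIndepFun Y μ :=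
  iIndep_of_iIndep_of_le (h.iIndep.iIndep_biSup (fun i ↦ (hX i).comap_le) hT)
    fun k ↦ (hY k).comap_le

theorem iIndepFun.iIndepFun_sum {β : Type*} [mβ : MeasurableSpace β] [AddCommMonoid β]
    [MeasurableAdd₂ β] {X : ι → Ω → β} (hX : ∀ i, Measurable (X i)) (h : iIndepFun X μ)
    {T : κ → Finset ι} (hT : Pairwise (Disjoint on T)) :
    iIndepFun (fun k a ↦ ∑ i ∈ T k, X i a) μ :=
  h.iIndepFun_of_measurable_biSup hX (T := fun k ↦ T k)
    (fun _ _ hkl ↦ Finset.disjoint_coe.2 (hT hkl)) fun k ↦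
      Finset.measurable_sum _ fun i hi ↦ (comap_measurable (X i)).mono
        (le_iSup₂ (f := fun j (_ : j ∈ (T k : Set ι)) ↦ mβ.comap (X j)) i hi) le_rfl

theorem measure_add_eq_sum_measure_inter {G β : Type*} [AddCommGroup G] [Fintype β]
    [MeasurableSpace β] [MeasurableSingletonClass β] {X : Ω → G} {Y : Ω → β}
    (hY : Measurable Y) (φ : β → G) (g : G) :
    μ {a | X a + φ (Y a) = g} = ∑ u, μ ({a | X a = g - φ u} ∩ {a | Y a = u}) := by
  rw [← Measure.restrict_apply_univ, ← Set.preimage_univ (f := Y), ← coe_univ,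
    ← sum_measure_preimage_singleton _ fun u _ ↦ hY (measurableSet_singleton u)]
  refine sum_congr rfl fun u _ ↦ ?_
  rw [Measure.restrict_apply (hY (measurableSet_singleton u))]
  congr 1
  ext a
  simp only [Set.mem_inter_iff, Set.mem_preimage, Set.mem_singleton_iff, Set.mem_ofPred_eq,
    eq_sub_iff_add_eq]
  grind

theorem iIndepFun.measure_add_eq_sum_prod {G : Type*} [Fintype ι] [DecidableEq ι]
    [AddCommGroup G] [Fintype G] [MeasurableSpace G] [MeasurableSingletonClass G]
    {X : Ω → G} {Y : ι → Ω → G}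
    (hY : ∀ i, Measurable (Y i)) (h : iIndepFun (fun o : Option ι ↦ o.elim X Y) μ)
    (φ : (ι → G) → G) (g : G) :
    μ {a | X a + φ (fun i ↦ Y i a) = g} =
      ∑ u : ι → G, μ {a | X a = g - φ u} * ∏ i, μ {a | Y i a = u i} := by
  rw [measure_add_eq_sum_measure_inter (measurable_pi_lambda _ hY)]
  refine sum_congr rfl fun u _ ↦ ?_
  have hprod := h.meas_iInter (s := fun o ↦ o.elim {a | X a = g - φ u} fun i ↦ {a | Y i a = u i})
    fun o ↦ by cases o <;> exact ⟨{_}, measurableSet_singleton _, rfl⟩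
  simp only [Fintype.prod_option, Option.elim_none, Option.elim_some] at hprod
  rw [← hprod]
  congr 1
  ext a
  simp [funext_iff, Option.forall]

end ProbabilityTheory

section ShiftRegister

variable {F : Type*} [Field F] (m : ℕ) [NeZero m]

open Fin.CommRing in
/-- Input `c (i + 1)` enters register `0` at time `i + 1` and advances one register per step. -/
def registerInputs (k : ℕ) (j : Fin m) : Finset ℕ :=
  {i ∈ range k | ((k - 1 - i : ℕ) : Fin m) = j}

open Fin.CommRing in
theorem shiftState_eq_sum_registerInputs (c : ℕ → F) (k : ℕ) (j : Fin m) :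
    shiftState m c k j = ∑ i ∈ registerInputs m k j, c (i + 1) := by
  induction k generalizing j with
  | zero => simp [shiftState, registerInputs]
  | succ k ih =>
    have hshift : ∀ i ∈ range k,
        ((k - i : ℕ) : Fin m) = j ↔ ((k - 1 - i : ℕ) : Fin m) = j - 1 := by
      intro i hi
      rw [show k - i = k - 1 - i + 1 by simp at hi; omega, Nat.cast_succ, eq_sub_iff_add_eq]
    rw [registerInputs, Nat.add_sub_cancel, range_add_one, filter_insert, filter_congr hshift,
      Nat.sub_self, Nat.cast_zero, shiftState, ih, registerInputs]
    by_cases hj : j = 0 <;> simp [hj, eq_comm]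

theorem registerInputs_subset_range (k : ℕ) (j : Fin m) : registerInputs m k j ⊆ range k :=
  filter_subset _ _

theorem pairwise_disjoint_registerInputs (k : ℕ) : Pairwise (Disjoint on registerInputs m k) :=
  fun _ _ hjj' ↦ disjoint_filter_filter' _ _ fun _ h h' i hi ↦ hjj' ((h i hi).symm.trans (h' i hi))

end ShiftRegister

theorem output_pmf_eq_iterated_convolution_general
    {Ω : Type*} [MeasureSpace Ω]
    {F : Type*} [Field F] [Fintype F]
    [MeasurableSpace F] [MeasurableSingletonClass F]
    (m : ℕ) [NeZero m] (c : ℕ → Ω → F) (hc : ∀ i, Measurable (c i))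
    (hindep : iIndepFun (m := fun _ => (inferInstance : MeasurableSpace F))
      (fun i : ℕ => c (i + 1)) ℙ)
    (h : Fin m → F) (k : ℕ) (hk : 1 ≤ k) :
    ∀ ω : F,
      ℙ {a | c k a + ∑ j : Fin m, h j * shiftState m (fun i => c i a) (k - 1) j = ω} =
        ∑ u : Fin m → F,
          ℙ {a | c k a = ω - ∑ j : Fin m, h j * u j} *
            ∏ j : Fin m, ℙ {a | shiftState m (fun i => c i a) (k - 1) j = u j} := by
  intro ω
  obtain ⟨K, rfl⟩ : ∃ K, k = K + 1 := ⟨k - 1, by omega⟩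
  rw [Nat.add_sub_cancel]
  have hS (j : Fin m) : (fun a ↦ shiftState m (fun i ↦ c i a) K j) =
      fun a ↦ ∑ i ∈ registerInputs m K j, c (i + 1) a :=
    funext fun a ↦ shiftState_eq_sum_registerInputs m _ K j
  have hblocks : (fun o : Option (Fin m) ↦
      o.elim (c (K + 1)) fun j a ↦ shiftState m (fun i ↦ c i a) K j) =
      fun o a ↦ ∑ i ∈ o.elim {K} (registerInputs m K), c (i + 1) a := by
    funext o
    cases o <;> simp [hS]
  have hdisj : Pairwise (Disjoint on fun o : Option (Fin m) ↦ o.elim {K} (registerInputs m K)) :=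
    (pairwise_disjoint_registerInputs m K).option_elim fun j ↦
      disjoint_singleton_left.2 fun hK ↦ notMem_range_self (registerInputs_subset_range m K j hK)
  have hindep_blocks := hindep.iIndepFun_sum (fun i ↦ hc (i + 1)) hdisj
  rw [← hblocks] at hindep_blocks
  exact hindep_blocks.measure_add_eq_sum_prod
    (fun j ↦ hS j ▸ Finset.measurable_sum _ fun i _ ↦ hc (i + 1)) (fun u ↦ ∑ j, h j * u j) ω

/-- Theorem 1, dual encoder for SISO MAP forward decoding: for mutually
independent inputs `(c_i)_{i ≥ 1}`, coefficients `h : Fin m → F`, and output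
`b_k = c_k + Σ_j h j · S (k−1) j`, the pmf of `b_k` is the iterated group convolution of
the pmf of `c_k` with the permuted pmfs of the registers:
`P(b_k = ω) = Σ_{u ∈ F^m} P(c_k = ω − Σ_j h j · u j) · Π_j P(S (k−1) j = u j)`. -/
theorem output_pmf_eq_iterated_convolution
    {Ω : Type*} [MeasureSpace Ω] [IsProbabilityMeasure (ℙ : Measure Ω)]
    {F : Type*} [Field F] [Fintype F]
    [MeasurableSpace F] [MeasurableSingletonClass F]
    (m : ℕ) [NeZero m] (c : ℕ → Ω → F) (hc : ∀ i, Measurable (c i))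
    (hindep : iIndepFun (m := fun _ => (inferInstance : MeasurableSpace F))
      (fun i : ℕ => c (i + 1)) ℙ)
    (h : Fin m → F) (k : ℕ) (hk : 1 ≤ k) :
    ∀ ω : F,
      ℙ {a | c k a + ∑ j : Fin m, h j * shiftState m (fun i => c i a) (k - 1) j = ω} =
        ∑ u : Fin m → F,
          ℙ {a | c k a = ω - ∑ j : Fin m, h j * u j} *
            ∏ j : Fin m, ℙ {a | shiftState m (fun i => c i a) (k - 1) j = u j} :=
  output_pmf_eq_iterated_convolution_general m c hc hindep h k hk
end
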